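/- arXiv:2305.06587 — 2 statements merged into one kernel-verified Lean document; each statement's English description precedes it below -/
import Mathlib

section
/- Let L ∈ ℝ^{N×N} be symmetric with eigendecomposition L = U Λ U^T where Λ has pairwise distinct diagonal entries, and let x ∈ ℝ^N be such that every entry of U^T x is nonzero. Then for any target vector z ∈ ℝ^N there exists a polynomial g of degree at most N−1 with g(L) x = z. -/
open Matrix Polynomial

/-- Conjugation by an invertible matrix as an algebra homomorphism. -/
def conjAlgHom {N : ℕ} (U : Matrix (Fin N) (Fin N) ℝ) (hU : Uᵀ * U = 1) :
    Matrix (Fin N) (Fin N) ℝ →ₐ[ℝ] Matrix (Fin N) (Fin N) ℝ where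
  toFun M := U * M * Uᵀ
  map_one' := by
    have h2 : U * Uᵀ = 1 := mul_eq_one_comm.mp hU
    simp [h2]
  map_mul' M M' := by
    show U * (M * M') * Uᵀ = (U * M * Uᵀ) * (U * M' * Uᵀ)
    calc U * (M * M') * Uᵀ = U * M * (Uᵀ * U) * M' * Uᵀ := by rw [hU]; noncomm_ring
      _ = (U * M * Uᵀ) * (U * M' * Uᵀ) := by noncomm_ring
  map_zero' := by simp
  map_add' M M' := by noncomm_ring
  commutes' r := by
    have h2 : U * Uᵀ = 1 := mul_eq_one_comm.mp hU
    simp [Algebra.algebraMap_eq_smul_one, Matrix.mul_smul, Matrix.smul_mul, h2]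

theorem stmt_4 {N : ℕ} (L U : Matrix (Fin N) (Fin N) ℝ) (d : Fin N → ℝ)
    (hU : Uᵀ * U = 1) (hL : L = U * Matrix.diagonal d * Uᵀ)
    (hdist : Function.Injective d)
    (x : Fin N → ℝ) (hx : ∀ i, Uᵀ.mulVec x i ≠ 0) (z : Fin N → ℝ) :
    ∃ g : Polynomial ℝ, g.natDegree ≤ N - 1 ∧ (Polynomial.aeval L g).mulVec x = z := by
  have h2 : U * Uᵀ = 1 := mul_eq_one_comm.mp hU
  set y : Fin N → ℝ := Uᵀ.mulVec x with hy
  set w : Fin N → ℝ := Uᵀ.mulVec z with hw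
  set r : Fin N → ℝ := fun i => w i / y i with hr
  have hinj : Set.InjOn d (Finset.univ : Finset (Fin N)) := hdist.injOn
  refine ⟨Lagrange.interpolate Finset.univ d r, ?_, ?_⟩
  · rcases eq_or_ne (Lagrange.interpolate Finset.univ d r) 0 with h0 | h0
    · simp [h0]
    · have hdeg := Lagrange.degree_interpolate_lt r hinj
      have := (Polynomial.natDegree_lt_iff_degree_lt h0).mpr (by simpa using hdeg)
      omega
  · set g := Lagrange.interpolate Finset.univ d r with hg
    have heval : ∀ i, g.eval (d i) = r i := fun i =>
      Lagrange.eval_interpolate_at_node r hinj (Finset.mem_univ i)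
    -- aeval L g = U * diagonal (g.eval ∘ d) * Uᵀ
    have key : Polynomial.aeval L g =
        U * Matrix.diagonal (fun i => g.eval (d i)) * Uᵀ := by
      have hLc : L = conjAlgHom U hU (Matrix.diagonal d) := hL
      rw [hLc, Polynomial.aeval_algHom_apply]
      have : Polynomial.aeval (Matrix.diagonal d) g =
          Matrix.diagonal (fun i => g.eval (d i)) := by
        have h := Polynomial.aeval_algHom_apply
          (Matrix.diagonalAlgHom ℝ : (Fin N → ℝ) →ₐ[ℝ] Matrix (Fin N) (Fin N) ℝ) d g
        simp only [Matrix.diagonalAlgHom_apply] at h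
        have h2 : Polynomial.aeval d g = fun i => g.eval (d i) := by
          funext j
          rw [Polynomial.aeval_fn_apply, Polynomial.coe_aeval_eq_eval]
        rw [h, h2]
      rw [this]; rfl
    rw [key]
    have hyz : (fun i => g.eval (d i) * y i) = w := by
      funext i
      rw [heval i, hr]
      exact div_mul_cancel₀ (w i) (hx i)
    calc (U * Matrix.diagonal (fun i => g.eval (d i)) * Uᵀ).mulVec x
        = U.mulVec ((Matrix.diagonal fun i => g.eval (d i)).mulVec y) := by
          rw [← Matrix.mulVec_mulVec, ← Matrix.mulVec_mulVec]
      _ = U.mulVec w := by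
          rw [show (Matrix.diagonal fun i => g.eval (d i)).mulVec y = w by
            funext i; rw [Matrix.mulVec_diagonal]; exact congrFun hyz i]
      _ = z := by rw [hw, Matrix.mulVec_mulVec, h2, Matrix.one_mulVec]
end

section
/- Let L ∈ ℝ^{N×N} be symmetric with eigendecomposition L = U Λ U^T, where Λ has pairwise distinct diagonal entries, and let x ∈ ℝ^N be such that every entry of U^T x is nonzero. If P is a permutation matrix with P^T L P = L and P x = x, then P = I. -/
open Matrix

theorem stmt_6 {N : ℕ} (L U : Matrix (Fin N) (Fin N) ℝ) (d : Fin N → ℝ)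
    (hU : Uᵀ * U = 1) (hL : L = U * Matrix.diagonal d * Uᵀ)
    (hdist : Function.Injective d)
    (x : Fin N → ℝ) (hx : ∀ i, Uᵀ.mulVec x i ≠ 0)
    (σ : Equiv.Perm (Fin N)) (P : Matrix (Fin N) (Fin N) ℝ)
    (hP : P = σ.permMatrix ℝ)
    (hLP : Pᵀ * L * P = L) (hPx : P.mulVec x = x) :
    P = 1 := by
  have hPP : P * Pᵀ = 1 := by
    subst hP
    rw [show ((σ.permMatrix ℝ)ᵀ : Matrix (Fin N) (Fin N) ℝ)
        = (σ.toPEquiv.symm).toMatrix from (PEquiv.toMatrix_symm _).symm,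
      ← PEquiv.toMatrix_trans, ← Equiv.toPEquiv_symm, ← Equiv.toPEquiv_trans]
    simp [PEquiv.toMatrix_refl]
  have hUU : U * Uᵀ = 1 := mul_eq_one_comm.mp hU
  -- L commutes with P
  have hcomm : L * P = P * L := by
    calc L * P = (P * Pᵀ) * L * P := by rw [hPP, one_mul]
    _ = P * (Pᵀ * L * P) := by noncomm_ring
    _ = P * L := by rw [hLP]
  set M : Matrix (Fin N) (Fin N) ℝ := Uᵀ * P * U with hM
  have hD : Matrix.diagonal d = Uᵀ * L * U := by
    rw [hL]
    have h' : Uᵀ * (U * Matrix.diagonal d * Uᵀ) * U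
        = (Uᵀ * U) * Matrix.diagonal d * (Uᵀ * U) := by noncomm_ring
    rw [h', hU, one_mul, mul_one]
  have hMD : M * Matrix.diagonal d = Matrix.diagonal d * M := by
    rw [hD, hM]
    calc Uᵀ * P * U * (Uᵀ * L * U) = Uᵀ * (P * ((U * Uᵀ) * L)) * U := by noncomm_ring
      _ = Uᵀ * (L * ((U * Uᵀ) * P)) * U := by rw [hUU, one_mul, one_mul, hcomm]
      _ = Uᵀ * L * U * (Uᵀ * P * U) := by noncomm_ring
  -- M is diagonal
  have hMdiag : ∀ i j, i ≠ j → M i j = 0 := by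
    intro i j hij
    have h1 : (M * Matrix.diagonal d) i j = M i j * d j := Matrix.mul_diagonal _ _ _ _
    have h2 : (Matrix.diagonal d * M) i j = d i * M i j := Matrix.diagonal_mul _ _ _ _
    have h3 : M i j * d j = d i * M i j := by rw [← h1, ← h2, hMD]
    by_contra h
    have hdd : d j = d i := mul_left_cancel₀ h (by linarith [h3])
    exact hij (hdist hdd).symm
  -- M fixes y = Uᵀ x with nonzero entries
  have hMU : M * Uᵀ = Uᵀ * P := by
    rw [hM]
    calc Uᵀ * P * U * Uᵀ = Uᵀ * (P * (U * Uᵀ)) := by noncomm_ring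
    _ = Uᵀ * P := by rw [hUU, mul_one]
  have hMy : M.mulVec (Uᵀ.mulVec x) = Uᵀ.mulVec x := by
    rw [Matrix.mulVec_mulVec, hMU, ← Matrix.mulVec_mulVec, hPx]
  have hMone : M = 1 := by
    ext i j
    rcases eq_or_ne i j with rfl | hij
    · have hsum : M.mulVec (Uᵀ.mulVec x) i = M i i * Uᵀ.mulVec x i := by
        rw [Matrix.mulVec, dotProduct]
        rw [Finset.sum_eq_single i]
        · intro b _ hb
          rw [hMdiag i b (Ne.symm hb), zero_mul]
        · intro h; exact absurd (Finset.mem_univ i) h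
      have heq : M i i * (Uᵀ.mulVec x) i = (Uᵀ.mulVec x) i := by
        rw [← hsum]; exact congrFun hMy i
      have hMii : M i i = 1 := mul_right_cancel₀ (hx i) (heq.trans (one_mul _).symm)
      simp [hMii]
    · simp [hMdiag i j hij, Matrix.one_apply_ne hij]
  have : P = U * M * Uᵀ := by
    rw [hM]
    calc P = (U * Uᵀ) * P * (U * Uᵀ) := by rw [hUU, one_mul, mul_one]
    _ = U * (Uᵀ * P * U) * Uᵀ := by noncomm_ring
  rw [this, hMone, mul_one, hUU]
end
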